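/- arXiv:1802.03536 — 2 statements merged into one kernel-verified Lean document; each statement's English description precedes it below -/
import Mathlib

section
/- Anticommutation relation of the super-Virasoro operators (eq. (3.12), third relation): for all integers m, n ≥ −1, the operators on A satisfy G_{m+1/2} ∘ G_{n+1/2} + G_{n+1/2} ∘ G_{m+1/2} = 2 L_{m+n+1} (note m+n+1 ≥ −1, so the right-hand side is always defined). -/
/-!
We work on the free supercommutative ℝ-algebra
`A = ℝ[g₀,g₁,…] ⊗ Λ(ξ_{1/2}, ξ_{3/2}, …)`, realized in Lean as
`MvPolynomial ℕ ℝ ⊗[ℝ] ExteriorAlgebra ℝ (ℕ →₀ ℝ)`; the even generator `g_k` is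
`X k ⊗ 1` and the odd generator `ξ_{k+1/2}` is `1 ⊗ ι (single k 1)`.

* `dg i` is the even derivation `∂/∂g_i` (the formal partial derivative on the
  polynomial factor), and `dxi i` is the odd derivation `∂/∂ξ_{i+1/2}`
  (contraction with the `i`-th dual-basis functional on the exterior factor).
* `gmul k` and `ximul k` are left multiplication by `g_k` and by `ξ_{k+1/2}`.
* The super-Virasoro operators of the supereigenvalue model
  (eqs. (3.10)-(3.11) of the paper, with `v = (t_s/2N)²`) are indexed by the
  integers `n ≥ -1`; we reindex them by `m : ℕ` via `n = m - 1` (a bijection from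
  `ℕ` onto `{n : ℤ | n ≥ -1}`): `Lop T₂ v m` is `L_{m-1}` and `Gop T₂ v m` is
  `G_{(m-1)+1/2} = G_{m-1/2}`.  Concretely (with `n = m-1`):

  `L_n = T₂ ∂/∂g_{n+2} + Σ_{k≥1} k g_k ∂/∂g_{k+n} + (v/2) Σ_{j=0}^{n} ∂²/(∂g_j∂g_{n-j})`
  `      + Σ_{k≥0, k+n≥0} (k+(n+1)/2) ξ_{k+1/2} ∂/∂ξ_{n+k+1/2}`
  `      + (v/2) Σ_{j=0}^{n-1} ((n-1)/2 - j) ∂²/(∂ξ_{j+1/2}∂ξ_{n-j-1/2})`,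

  `G_{n+1/2} = T₂ ∂/∂ξ_{n+5/2} + Σ_{k≥1} k g_k ∂/∂ξ_{n+k+1/2}`
  `      + Σ_{k≥0} ξ_{k+1/2} ∂/∂g_{k+n+1} + v Σ_{j=0}^{n} (∂/∂ξ_{j+1/2})(∂/∂g_{n-j})`.

  The infinite sums over `k` are taken pointwise via `finsum` (on each element of
  `A` only finitely many summands act nontrivially); a `k = 0` summand whose
  stated range is `k ≥ 1` carries the coefficient `0`, so including it is
  harmless.  Sums `Σ_{j=0}^{n}` and `Σ_{j=0}^{n-1}` are `Finset.range m` and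
  `Finset.range (m-1)` respectively (empty when the upper limit is negative).
-/

open scoped TensorProduct

set_option synthInstance.maxHeartbeats 1000000
set_option maxHeartbeats 1000000

/-- The free supercommutative algebra `ℝ[g₀,g₁,…] ⊗ Λ(ξ_{1/2},ξ_{3/2},…)`. -/
abbrev SEA : Type := MvPolynomial ℕ ℝ ⊗[ℝ] ExteriorAlgebra ℝ (ℕ →₀ ℝ)

/-- The even derivation `∂/∂g_i`. -/
noncomputable def dg (i : ℕ) : SEA →ₗ[ℝ] SEA :=
  TensorProduct.map (MvPolynomial.pderiv i).toLinearMap LinearMap.id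

/-- The odd derivation `∂/∂ξ_{i+1/2}`: contraction with the `i`-th dual-basis
functional on the exterior factor. -/
noncomputable def dxi (i : ℕ) : SEA →ₗ[ℝ] SEA :=
  TensorProduct.map LinearMap.id
    (CliffordAlgebra.contractLeft (Q := (0 : QuadraticForm ℝ (ℕ →₀ ℝ))) (Finsupp.lapply i))

/-- Left multiplication by `g_k`. -/
noncomputable def gmul (k : ℕ) : SEA →ₗ[ℝ] SEA :=
  LinearMap.mulLeft ℝ ((MvPolynomial.X k : MvPolynomial ℕ ℝ) ⊗ₜ[ℝ] (1 : ExteriorAlgebra ℝ (ℕ →₀ ℝ)))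

/-- Left multiplication by `ξ_{k+1/2}`. -/
noncomputable def ximul (k : ℕ) : SEA →ₗ[ℝ] SEA :=
  LinearMap.mulLeft ℝ ((1 : MvPolynomial ℕ ℝ) ⊗ₜ[ℝ] ExteriorAlgebra.ι ℝ (Finsupp.single k 1))

/-- The bosonic super-Virasoro operator `L_{m-1}` (eq. (3.10)). -/
noncomputable def Lop (T₂ v : ℝ) (m : ℕ) : SEA → SEA := fun a =>
  T₂ • dg (m + 1) a
  + (∑ᶠ k : ℕ, (k : ℝ) • gmul k (dg (m + k - 1) a))
  + (v / 2) • ∑ j ∈ Finset.range m, dg j (dg (m - 1 - j) a)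
  + (∑ᶠ k : ℕ, if m + k = 0 then 0 else ((k : ℝ) + (m : ℝ) / 2) • ximul k (dxi (m + k - 1) a))
  + (v / 2) • ∑ j ∈ Finset.range (m - 1),
      (((m : ℝ) - 2) / 2 - (j : ℝ)) • dxi j (dxi (m - j - 2) a)

/-- The fermionic super-Virasoro operator `G_{(m-1)+1/2}` (eq. (3.11)). -/
noncomputable def Gop (T₂ v : ℝ) (m : ℕ) : SEA → SEA := fun a =>
  T₂ • dxi (m + 1) a
  + (∑ᶠ k : ℕ, (k : ℝ) • gmul k (dxi (m + k - 1) a))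
  + (∑ᶠ k : ℕ, ximul k (dg (k + m) a))
  + v • ∑ j ∈ Finset.range m, dxi j (dg (m - 1 - j) a)

/-!
Every element of `SEA` involves only finitely many generators, so on it all infinite sums in `Gop`
and `Lop` may be cut off at one common bound `M`. Then `G_{m-1/2}` is the sum of four operators
`T₂ ∂_ξ`, `Σ k g_k ∂_ξ`, `Σ ξ ∂_g` and `v Σ ∂_ξ ∂_g`, and the anticommutator splits into sixteen
anticommutators of pieces. The derivations (anti)commute with each other and with multiplication by
the generators they do not differentiate, so only the cross terms produced by `[∂/∂g_i, g_k] = δ_{ik}`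
and `{∂/∂ξ_i, ξ_k} = δ_{ik}` survive; the `(m, n)` and `(n, m)` terms of each kind add up to twice
one summand of `L`. For the `∂_ξ ∂_ξ` summand the coefficients `(n-1-j) + (m-1-j)` and
`(m+n-2)/2 - j` differ termwise: they agree only after symmetrising under `j ↦ m+n-2-j`, which flips
the sign of `∂_{ξ_j} ∂_{ξ_{m+n-2-j}}`.
-/

open Finset

theorem MvPolynomial.pderiv_pderiv_comm {R σ : Type*} [CommSemiring R] (i j : σ)
    (p : MvPolynomial σ R) : pderiv i (pderiv j p) = pderiv j (pderiv i p) := by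
  classical
  induction p using MvPolynomial.induction_on with
  | C a => simp
  | add p q hp hq => simp [hp, hq]
  | mul_X p k hp =>
      simp only [Derivation.leibniz, pderiv_X, map_add, smul_eq_mul, hp, Pi.single_apply]
      split_ifs <;> subst_vars <;> simp only [map_zero, Derivation.map_one_eq_zero, mul_zero,
        add_zero] <;> ring

lemma ExteriorAlgebra.exists_contractLeft_lapply_eq_zero {R : Type*} [CommRing R]
    (y : ExteriorAlgebra R (ℕ →₀ R)) :
    ∃ N, ∀ i, N ≤ i → CliffordAlgebra.contractLeft (Finsupp.lapply i) y = 0 := by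
  induction y using CliffordAlgebra.left_induction with
  | algebraMap r => exact ⟨0, fun i _ => CliffordAlgebra.contractLeft_algebraMap _ _ _⟩
  | add x y hx hy =>
      obtain ⟨N₁, h₁⟩ := hx
      obtain ⟨N₂, h₂⟩ := hy
      exact ⟨max N₁ N₂, fun i hi => by
        rw [map_add, h₁ i (le_of_max_le_left hi), h₂ i (le_of_max_le_right hi), add_zero]⟩
  | ι_mul x w hx =>
      obtain ⟨N₁, h₁⟩ := hx
      obtain ⟨N₂, h₂⟩ := exists_nat_subset_range w.support
      refine ⟨max N₁ N₂, fun i hi => ?_⟩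
      have hwi : w i = 0 :=
        Finsupp.notMem_support_iff.1 fun hmem => by
          have := mem_range.1 (h₂ hmem)
          omega
      rw [CliffordAlgebra.contractLeft_ι_mul, Finsupp.lapply_apply, hwi, zero_smul,
        h₁ i (le_of_max_le_left hi), mul_zero, sub_zero]

lemma finsum_eq_sum_range {X : Type*} [AddCommMonoid X] {f : ℕ → X} {M : ℕ}
    (h : ∀ k, M ≤ k → f k = 0) : ∑ᶠ k, f k = ∑ k ∈ range M, f k :=
  finsum_eq_sum_of_support_subset f fun k hk => by
    simpa using not_le.1 (mt (h k) hk)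

section Reindexing

variable {X : Type*}

lemma sum_range_eq_sum_range_of_eq_zero [AddCommMonoid X] {A B : ℕ} {f : ℕ → X}
    (h : ∀ j, min A B ≤ j → f j = 0) : ∑ j ∈ range A, f j = ∑ j ∈ range B, f j := by
  rcases le_total A B with hAB | hAB
  · exact sum_subset (range_subset_range.2 hAB) fun j _ hj =>
      h j (by rw [mem_range] at hj; omega)
  · exact (sum_subset (range_subset_range.2 hAB) fun j _ hj =>
      h j (by rw [mem_range] at hj; omega)).symm

lemma sum_range_add_sum_range_of_symm [AddCommMonoid X] (F : ℕ → ℕ → X)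
    (hF : ∀ i j, F i j = F j i) (m n : ℕ) :
    ∑ j ∈ range n, F (j + m) (n - 1 - j) + ∑ j ∈ range m, F (j + n) (m - 1 - j)
      = ∑ j ∈ range (m + n), F j (m + n - 1 - j) := by
  rw [sum_range_add, add_comm, ← sum_range_reflect _ m]
  congr 1 <;> refine sum_congr rfl fun j hj => ?_ <;> have := mem_range.1 hj
  · rw [show m - 1 - j + n = m + n - 1 - j by omega, show m - 1 - (m - 1 - j) = j by omega, hF]
  · rw [add_comm j m, show m + n - 1 - (m + j) = n - 1 - j by omega]

lemma sum_range_smul_eq_zero_of_reflect {𝕜 : Type*} [Field 𝕜] [CharZero 𝕜] [AddCommGroup X]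
    [Module 𝕜 X] {K : ℕ} (c : ℕ → 𝕜) (G : ℕ → X) (hc : ∀ j < K, c (K - 1 - j) = c j)
    (hG : ∀ j < K, G (K - 1 - j) = -G j) : ∑ j ∈ range K, c j • G j = 0 := by
  have hneg : ∑ j ∈ range K, c j • G j = -∑ j ∈ range K, c j • G j := by
    rw [← sum_neg_distrib]
    nth_rewrite 1 [← sum_range_reflect]
    exact sum_congr rfl fun j hj => by
      rw [hc j (mem_range.1 hj), hG j (mem_range.1 hj), smul_neg]
  have htwo : (2 : 𝕜) • ∑ j ∈ range K, c j • G j = 0 := by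
    rw [two_smul]
    nth_rewrite 2 [hneg]
    exact add_neg_cancel _
  exact (smul_eq_zero.1 htwo).resolve_left two_ne_zero

end Reindexing

section Anticommutator

variable {R : Type*} [NonUnitalNonAssocSemiring R]

def anticomm (x y : R) : R := x * y + y * x

lemma anticomm_comm (x y : R) : anticomm x y = anticomm y x := add_comm _ _

lemma anticomm_add_left (x y z : R) : anticomm (x + y) z = anticomm x z + anticomm y z := by
  simp only [anticomm, add_mul, mul_add]
  abel

lemma anticomm_add_right (x y z : R) : anticomm x (y + z) = anticomm x y + anticomm x z := by
  simp only [anticomm, add_mul, mul_add]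
  abel

end Anticommutator

lemma Module.End.anticomm_apply {R M : Type*} [Semiring R] [AddCommMonoid M] [Module R M]
    (f g : Module.End R M) (a : M) : anticomm f g a = f (g a) + g (f a) :=
  rfl

section CanonicalRelations

variable (i j k l : ℕ) (a : SEA)

lemma gmul_tmul (x : MvPolynomial ℕ ℝ) (y : ExteriorAlgebra ℝ (ℕ →₀ ℝ)) :
    gmul k (x ⊗ₜ[ℝ] y) = (MvPolynomial.X k * x) ⊗ₜ[ℝ] y := by
  simp [gmul, Algebra.TensorProduct.tmul_mul_tmul]

lemma ximul_tmul (x : MvPolynomial ℕ ℝ) (y : ExteriorAlgebra ℝ (ℕ →₀ ℝ)) :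
    ximul k (x ⊗ₜ[ℝ] y) = x ⊗ₜ[ℝ] (ExteriorAlgebra.ι ℝ (Finsupp.single k 1) * y) := by
  simp [ximul, Algebra.TensorProduct.tmul_mul_tmul]

lemma dg_dg_comm : dg i (dg j a) = dg j (dg i a) := by
  induction a using TensorProduct.induction_on with
  | zero => simp
  | tmul x y => simp [dg, MvPolynomial.pderiv_pderiv_comm]
  | add a b ha hb => simp [ha, hb]

lemma dxi_dxi_anticomm : dxi i (dxi j a) = -dxi j (dxi i a) := by
  induction a using TensorProduct.induction_on with
  | zero => simp
  | tmul x y =>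
      simp only [dxi, TensorProduct.map_tmul, LinearMap.id_apply]
      rw [CliffordAlgebra.contractLeft_comm, TensorProduct.tmul_neg]
  | add a b ha hb => simp only [map_add, ha, hb, neg_add]

lemma dg_dxi_comm : dg i (dxi j a) = dxi j (dg i a) := by
  induction a using TensorProduct.induction_on with
  | zero => simp
  | tmul x y => simp [dg, dxi]
  | add a b ha hb => simp [ha, hb]

lemma dg_gmul : dg i (gmul k a) = gmul k (dg i a) + if i = k then a else 0 := by
  induction a using TensorProduct.induction_on with
  | zero => simp
  | tmul x y =>
      rcases eq_or_ne i k with rfl | h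
      · simp [dg, gmul_tmul, TensorProduct.add_tmul]
      · simp [dg, gmul_tmul, MvPolynomial.pderiv_X_of_ne h.symm, h]
  | add a b ha hb =>
      simp only [map_add, ha, hb]
      split_ifs <;> abel

lemma dxi_ximul : dxi i (ximul k a) = (if i = k then a else 0) - ximul k (dxi i a) := by
  induction a using TensorProduct.induction_on with
  | zero => simp
  | tmul x y =>
      simp only [dxi, ximul_tmul, TensorProduct.map_tmul, LinearMap.id_apply,
        CliffordAlgebra.contractLeft_ι_mul, Finsupp.lapply_apply, Finsupp.single_apply,
        TensorProduct.tmul_sub]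
      split_ifs <;> simp_all [eq_comm]
  | add a b ha hb =>
      simp only [map_add, ha, hb]
      split_ifs <;> abel

lemma dg_ximul_comm : dg i (ximul k a) = ximul k (dg i a) := by
  induction a using TensorProduct.induction_on with
  | zero => simp
  | tmul x y => simp [dg, ximul_tmul]
  | add a b ha hb => simp [ha, hb]

lemma dxi_gmul_comm : dxi i (gmul k a) = gmul k (dxi i a) := by
  induction a using TensorProduct.induction_on with
  | zero => simp
  | tmul x y => simp [dxi, gmul_tmul]
  | add a b ha hb => simp [ha, hb]

lemma gmul_gmul_comm : gmul k (gmul l a) = gmul l (gmul k a) := by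
  simp only [gmul, LinearMap.mulLeft_apply, ← mul_assoc, Algebra.TensorProduct.tmul_mul_tmul,
    mul_comm (MvPolynomial.X k), mul_one]

lemma gmul_ximul_comm : gmul k (ximul l a) = ximul l (gmul k a) := by
  simp only [gmul, ximul, LinearMap.mulLeft_apply, ← mul_assoc,
    Algebra.TensorProduct.tmul_mul_tmul, mul_one, one_mul]

lemma ximul_ximul_anticomm : ximul k (ximul l a) = -ximul l (ximul k a) := by
  simp only [ximul, LinearMap.mulLeft_apply, ← mul_assoc, Algebra.TensorProduct.tmul_mul_tmul,
    mul_one]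
  rw [eq_neg_of_add_eq_zero_left (ExteriorAlgebra.ι_add_mul_swap _ _), TensorProduct.tmul_neg]
  exact neg_mul (α := SEA) _ _

lemma dg_mul_dg_comm : dg i * dg j = dg j * dg i :=
  LinearMap.ext (dg_dg_comm i j)

lemma dxi_mul_dxi_anticomm : dxi i * dxi j = -(dxi j * dxi i) :=
  LinearMap.ext (dxi_dxi_anticomm i j)

end CanonicalRelations

/-- The elements involving only the generators `g_i`, `ξ_{i+1/2}` with `i < N`. -/
noncomputable def supportedBelow (N : ℕ) : Submodule ℝ SEA :=
  ⨅ (i : ℕ) (_ : N ≤ i), LinearMap.ker (dg i) ⊓ LinearMap.ker (dxi i)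

section SupportedBelow

variable {N : ℕ} {a : SEA}

lemma mem_supportedBelow :
    a ∈ supportedBelow N ↔ ∀ i, N ≤ i → dg i a = 0 ∧ dxi i a = 0 := by
  simp [supportedBelow, Submodule.mem_iInf]

lemma supportedBelow_mono {N N' : ℕ} (h : N ≤ N') : supportedBelow N ≤ supportedBelow N' :=
  fun _ ha => mem_supportedBelow.2 fun i hi => mem_supportedBelow.1 ha i (h.trans hi)

lemma dg_mem_supportedBelow (ha : a ∈ supportedBelow N) (j : ℕ) :
    dg j a ∈ supportedBelow N := by
  refine mem_supportedBelow.2 fun i hi => ?_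
  obtain ⟨hg, hxi⟩ := mem_supportedBelow.1 ha i hi
  rw [dg_dg_comm, ← dg_dxi_comm]
  simp [hg, hxi]

lemma dxi_mem_supportedBelow (ha : a ∈ supportedBelow N) (j : ℕ) :
    dxi j a ∈ supportedBelow N := by
  refine mem_supportedBelow.2 fun i hi => ?_
  obtain ⟨hg, hxi⟩ := mem_supportedBelow.1 ha i hi
  rw [dg_dxi_comm, dxi_dxi_anticomm]
  simp [hg, hxi]

lemma gmul_mem_supportedBelow (ha : a ∈ supportedBelow N) {k : ℕ} (hk : k < N) :
    gmul k a ∈ supportedBelow N := by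
  refine mem_supportedBelow.2 fun i hi => ?_
  obtain ⟨hg, hxi⟩ := mem_supportedBelow.1 ha i hi
  rw [dg_gmul, if_neg (by omega), dxi_gmul_comm]
  simp [hg, hxi]

lemma ximul_mem_supportedBelow (ha : a ∈ supportedBelow N) {k : ℕ} (hk : k < N) :
    ximul k a ∈ supportedBelow N := by
  refine mem_supportedBelow.2 fun i hi => ?_
  obtain ⟨hg, hxi⟩ := mem_supportedBelow.1 ha i hi
  rw [dg_ximul_comm, dxi_ximul, if_neg (by omega)]
  simp [hg, hxi]

end SupportedBelow

lemma exists_mem_supportedBelow (a : SEA) : ∃ N, a ∈ supportedBelow N := by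
  induction a using TensorProduct.induction_on with
  | zero => exact ⟨0, zero_mem _⟩
  | tmul x y =>
      obtain ⟨N₁, h₁⟩ := exists_nat_subset_range x.vars
      obtain ⟨N₂, h₂⟩ := ExteriorAlgebra.exists_contractLeft_lapply_eq_zero y
      refine ⟨max N₁ N₂, mem_supportedBelow.2 fun i hi => ⟨?_, ?_⟩⟩
      · have hi : i ∉ x.vars := fun hmem => by
          have := mem_range.1 (h₁ hmem)
          omega
        simp [dg, MvPolynomial.pderiv_eq_zero_of_notMem_vars hi]
      · simp [dxi, h₂ i (le_of_max_le_right hi)]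
  | add a b ha hb =>
      obtain ⟨N₁, h₁⟩ := ha
      obtain ⟨N₂, h₂⟩ := hb
      exact ⟨max N₁ N₂, add_mem (supportedBelow_mono (le_max_left _ _) h₁)
        (supportedBelow_mono (le_max_right _ _) h₂)⟩

-- The summands of `Gop` and `Lop` as operators, with the sums over `k` cut off at `k < M`.

section Truncation

variable (T₂ v : ℝ) (M m : ℕ)

noncomputable def GT₂ : Module.End ℝ SEA := T₂ • dxi (m + 1)

noncomputable def GgDxi : Module.End ℝ SEA :=
  ∑ k ∈ range M, (k : ℝ) • (gmul k * dxi (m + k - 1))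

noncomputable def GxiDg : Module.End ℝ SEA := ∑ k ∈ range M, ximul k * dg (k + m)

noncomputable def GDxiDg : Module.End ℝ SEA := v • ∑ j ∈ range m, dxi j * dg (m - 1 - j)

noncomputable def Gtrunc : Module.End ℝ SEA := GT₂ T₂ m + GgDxi M m + GxiDg M m + GDxiDg v m

noncomputable def LT₂ : Module.End ℝ SEA := T₂ • dg (m + 1)

noncomputable def LgDg : Module.End ℝ SEA := ∑ k ∈ range M, (k : ℝ) • (gmul k * dg (m + k - 1))

noncomputable def LDgDg : Module.End ℝ SEA := (v / 2) • ∑ j ∈ range m, dg j * dg (m - 1 - j)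

noncomputable def LxiDxi : Module.End ℝ SEA :=
  ∑ k ∈ range M,
    (if m + k = 0 then 0 else (k : ℝ) + (m : ℝ) / 2) • (ximul k * dxi (m + k - 1))

noncomputable def LDxiDxi : Module.End ℝ SEA :=
  (v / 2) • ∑ j ∈ range (m - 1), (((m : ℝ) - 2) / 2 - j) • (dxi j * dxi (m - j - 2))

noncomputable def Ltrunc : Module.End ℝ SEA :=
  LT₂ T₂ m + LgDg M m + LDgDg v m + LxiDxi M m + LDxiDxi v m

variable (b : SEA)

lemma GT₂_apply : GT₂ T₂ m b = T₂ • dxi (m + 1) b := rfl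

lemma GgDxi_apply : GgDxi M m b = ∑ k ∈ range M, (k : ℝ) • gmul k (dxi (m + k - 1) b) := by
  simp [GgDxi, LinearMap.sum_apply]

lemma GxiDg_apply : GxiDg M m b = ∑ k ∈ range M, ximul k (dg (k + m) b) := by
  simp [GxiDg, LinearMap.sum_apply]

lemma GDxiDg_apply : GDxiDg v m b = v • ∑ j ∈ range m, dxi j (dg (m - 1 - j) b) := by
  simp [GDxiDg, LinearMap.sum_apply]

variable {T₂ v M m b} {N : ℕ}

lemma Gop_eq_Gtrunc (hb : b ∈ supportedBelow N) (hM : N + 1 ≤ M) :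
    Gop T₂ v m b = Gtrunc T₂ v M m b := by
  have hb := mem_supportedBelow.1 hb
  rw [Gop, finsum_eq_sum_range (M := M) fun k hk => by rw [(hb _ (by omega)).2, map_zero,
      smul_zero], finsum_eq_sum_range (M := M) fun k hk => by rw [(hb _ (by omega)).1, map_zero]]
  simp only [Gtrunc, LinearMap.add_apply, GT₂_apply, GgDxi_apply, GxiDg_apply, GDxiDg_apply]

lemma Lop_eq_Ltrunc (hb : b ∈ supportedBelow N) (hM : N + 1 ≤ M) :
    Lop T₂ v m b = Ltrunc T₂ v M m b := by
  have hb := mem_supportedBelow.1 hb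
  rw [Lop, finsum_eq_sum_range (M := M) fun k hk => by rw [(hb _ (by omega)).1, map_zero,
      smul_zero], finsum_eq_sum_range (M := M) fun k hk => by rw [(hb _ (by omega)).2, map_zero,
      smul_zero, ite_self]]
  simp only [Ltrunc, LT₂, LgDg, LDgDg, LxiDxi, LDxiDxi, LinearMap.add_apply, LinearMap.smul_apply,
    LinearMap.sum_apply, Module.End.mul_apply, ite_smul, zero_smul, DFunLike.ite_apply,
    LinearMap.zero_apply]

lemma Gtrunc_mem_supportedBelow (hb : b ∈ supportedBelow N) (hM : M ≤ N) :
    Gtrunc T₂ v M m b ∈ supportedBelow N := by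
  simp only [Gtrunc, LinearMap.add_apply, GT₂_apply, GgDxi_apply, GxiDg_apply, GDxiDg_apply]
  refine add_mem (add_mem (add_mem ?_ ?_) ?_) ?_
  · exact Submodule.smul_mem _ _ (dxi_mem_supportedBelow hb _)
  · exact sum_mem fun k hk => Submodule.smul_mem _ _ <|
      gmul_mem_supportedBelow (dxi_mem_supportedBelow hb _) ((mem_range.1 hk).trans_le hM)
  · exact sum_mem fun k hk =>
      ximul_mem_supportedBelow (dg_mem_supportedBelow hb _) ((mem_range.1 hk).trans_le hM)
  · exact Submodule.smul_mem _ _ <| sum_mem fun j _ =>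
      dxi_mem_supportedBelow (dg_mem_supportedBelow hb _) _

lemma Gop_mem_supportedBelow (hb : b ∈ supportedBelow N) :
    Gop T₂ v m b ∈ supportedBelow (N + 1) := by
  have hb' := supportedBelow_mono (Nat.le_succ N) hb
  rw [Gop_eq_Gtrunc hb le_rfl]
  exact Gtrunc_mem_supportedBelow hb' le_rfl

end Truncation

section Blocks

variable (T₂ v : ℝ) (M m n : ℕ)

lemma anticomm_GT₂_GT₂ : anticomm (GT₂ T₂ m) (GT₂ T₂ n) = 0 := by
  rw [anticomm, GT₂, GT₂, smul_mul_smul_comm, smul_mul_smul_comm, dxi_mul_dxi_anticomm (m + 1)]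
  module

lemma anticomm_GT₂_GgDxi : anticomm (GT₂ T₂ m) (GgDxi M n) = 0 := by
  refine LinearMap.ext fun a => ?_
  simp only [Module.End.anticomm_apply, GT₂_apply, GgDxi_apply, map_sum, map_smul, smul_sum,
    ← sum_add_distrib, dxi_gmul_comm, LinearMap.zero_apply]
  refine sum_eq_zero fun k _ => ?_
  rw [dxi_dxi_anticomm (m + 1), map_neg]
  module

lemma anticomm_GT₂_GDxiDg : anticomm (GT₂ T₂ m) (GDxiDg v n) = 0 := by
  refine LinearMap.ext fun a => ?_
  simp only [Module.End.anticomm_apply, GT₂_apply, GDxiDg_apply, map_sum, map_smul, smul_sum,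
    ← sum_add_distrib, dg_dxi_comm, LinearMap.zero_apply]
  refine sum_eq_zero fun j _ => ?_
  rw [dxi_dxi_anticomm j]
  module

lemma anticomm_GgDxi_GgDxi : anticomm (GgDxi M m) (GgDxi M n) = 0 := by
  refine LinearMap.ext fun a => ?_
  simp only [Module.End.anticomm_apply, GgDxi_apply, map_sum, map_smul, smul_sum, dxi_gmul_comm,
    LinearMap.zero_apply]
  rw [sum_comm (s := range M), ← sum_add_distrib]
  refine sum_eq_zero fun k _ => ?_
  rw [← sum_add_distrib]
  refine sum_eq_zero fun l _ => ?_
  rw [dxi_dxi_anticomm (m + k - 1), map_neg, map_neg, gmul_gmul_comm l]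
  module

lemma anticomm_GxiDg_GxiDg : anticomm (GxiDg M m) (GxiDg M n) = 0 := by
  refine LinearMap.ext fun a => ?_
  simp only [Module.End.anticomm_apply, GxiDg_apply, map_sum, dg_ximul_comm,
    LinearMap.zero_apply]
  rw [sum_comm (s := range M), ← sum_add_distrib]
  refine sum_eq_zero fun k _ => ?_
  rw [← sum_add_distrib]
  refine sum_eq_zero fun l _ => ?_
  rw [dg_dg_comm (k + m), ximul_ximul_anticomm k]
  module

lemma anticomm_GDxiDg_GDxiDg : anticomm (GDxiDg v m) (GDxiDg v n) = 0 := by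
  refine LinearMap.ext fun a => ?_
  simp only [Module.End.anticomm_apply, GDxiDg_apply, map_sum, map_smul, smul_sum, dg_dxi_comm,
    LinearMap.zero_apply]
  rw [sum_comm (s := range m), ← sum_add_distrib]
  refine sum_eq_zero fun j _ => ?_
  rw [← sum_add_distrib]
  refine sum_eq_zero fun i _ => ?_
  rw [dg_dg_comm (m - 1 - i), dxi_dxi_anticomm j]
  module

variable {M}

lemma anticomm_GT₂_GxiDg (hm : m + 1 < M) :
    anticomm (GT₂ T₂ m) (GxiDg M n) = T₂ • dg (m + n + 1) := by
  refine LinearMap.ext fun a => ?_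
  have hterm : ∀ k, T₂ • dxi (m + 1) (ximul k (dg (k + n) a))
      + ximul k (dg (k + n) (T₂ • dxi (m + 1) a))
      = if m + 1 = k then T₂ • dg (m + n + 1) a else 0 := by
    intro k
    rw [dxi_ximul, map_smul, map_smul, dg_dxi_comm]
    split_ifs with h
    · subst h
      rw [show m + 1 + n = m + n + 1 by omega]
      module
    · module
  simp only [Module.End.anticomm_apply, GT₂_apply, GxiDg_apply, map_sum, ← sum_add_distrib,
    hterm, sum_ite_eq, mem_range, if_pos hm, LinearMap.smul_apply]

lemma anticomm_GgDxi_GDxiDg (hn : n ≤ M) :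
    anticomm (GgDxi M m) (GDxiDg v n)
      = v • ∑ j ∈ range n, ((n - 1 - j : ℕ) : ℝ) • (dxi j * dxi (m + n - 2 - j)) := by
  refine LinearMap.ext fun a => ?_
  have hterm : ∀ j k : ℕ, (k : ℝ) • gmul k (dxi (m + k - 1) (v • dxi j (dg (n - 1 - j) a)))
      + v • dxi j (dg (n - 1 - j) ((k : ℝ) • gmul k (dxi (m + k - 1) a)))
      = if n - 1 - j = k then v • (k : ℝ) • dxi j (dxi (m + k - 1) a) else 0 := by
    intro j k
    rw [map_smul, map_smul, map_smul, map_smul, dg_gmul, map_add, dxi_gmul_comm,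
      dxi_dxi_anticomm (m + k - 1), dg_dxi_comm, map_neg]
    split_ifs
    · module
    · rw [map_zero, add_zero]
      module
  simp only [Module.End.anticomm_apply, GgDxi_apply, GDxiDg_apply, map_sum, smul_sum,
    LinearMap.smul_apply, LinearMap.sum_apply, Module.End.mul_apply]
  rw [sum_comm (s := range M), ← sum_add_distrib]
  refine sum_congr rfl fun j hj => ?_
  have hjn : j < n := mem_range.1 hj
  simp only [← sum_add_distrib, hterm, sum_ite_eq, mem_range,
    if_pos (show n - 1 - j < M by omega)]
  rw [show m + (n - 1 - j) - 1 = m + n - 2 - j by omega, smul_comm]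

lemma anticomm_GxiDg_GDxiDg (hn : n ≤ M) :
    anticomm (GxiDg M m) (GDxiDg v n) = v • ∑ j ∈ range n, dg (j + m) * dg (n - 1 - j) := by
  refine LinearMap.ext fun a => ?_
  have hterm : ∀ j k, ximul k (dg (k + m) (v • dxi j (dg (n - 1 - j) a)))
      + v • dxi j (dg (n - 1 - j) (ximul k (dg (k + m) a)))
      = if j = k then v • dg (k + m) (dg (n - 1 - j) a) else 0 := by
    intro j k
    rw [map_smul, map_smul, dg_dxi_comm, dg_ximul_comm, dg_dg_comm (n - 1 - j), dxi_ximul]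
    split_ifs <;> module
  simp only [Module.End.anticomm_apply, GxiDg_apply, GDxiDg_apply, map_sum, smul_sum,
    LinearMap.smul_apply, LinearMap.sum_apply, Module.End.mul_apply]
  rw [sum_comm (s := range M), ← sum_add_distrib]
  refine sum_congr rfl fun j hj => ?_
  have hj : j < M := (mem_range.1 hj).trans_le hn
  simp only [← sum_add_distrib, hterm, sum_ite_eq, mem_range, if_pos hj]

end Blocks

lemma anticomm_GgDxi_GxiDg_apply {M N : ℕ} (m n : ℕ) {a : SEA} (ha : a ∈ supportedBelow N)
    (hM : N + 1 ≤ M) :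
    anticomm (GgDxi M m) (GxiDg M n) a
      = LgDg M (m + n) a
        + (∑ l ∈ range M, ((l : ℝ) + n) • (ximul l * dxi (m + n + l - 1))) a := by
  have ha := mem_supportedBelow.1 ha
  have hterm : ∀ k l : ℕ, (k : ℝ) • gmul k (dxi (m + k - 1) (ximul l (dg (l + n) a)))
      + ximul l (dg (l + n) ((k : ℝ) • gmul k (dxi (m + k - 1) a)))
      = (if m + k - 1 = l then (k : ℝ) • gmul k (dg (l + n) a) else 0)
        + if l + n = k then (k : ℝ) • ximul l (dxi (m + k - 1) a) else 0 := by
    intro k l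
    rw [dxi_ximul, map_smul, dg_gmul, ← dg_dxi_comm]
    split_ifs <;> simp only [map_sub, map_add, map_zero, map_smul, gmul_ximul_comm] <;> module
  have hg : ∀ k, (if m + k - 1 ∈ range M then (k : ℝ) • gmul k (dg (m + k - 1 + n) a) else 0)
      = (k : ℝ) • gmul k (dg (m + n + k - 1) a) := by
    intro k
    rcases Nat.eq_zero_or_pos k with rfl | hk
    · simp
    split_ifs with h
    · rw [show m + k - 1 + n = m + n + k - 1 by omega]
    · rw [(ha _ (by rw [mem_range] at h; omega)).1, map_zero, smul_zero]
  have hxi : ∀ l, (if l + n ∈ range M then ((l + n : ℕ) : ℝ) • ximul l (dxi (m + (l + n) - 1) a)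
      else 0) = ((l : ℝ) + n) • ximul l (dxi (m + n + l - 1) a) := by
    intro l
    split_ifs with h
    · rw [show m + (l + n) - 1 = m + n + l - 1 by omega, Nat.cast_add]
    · rw [(ha _ (by rw [mem_range] at h; omega)).2, map_zero, smul_zero]
  simp only [Module.End.anticomm_apply, GgDxi_apply, GxiDg_apply, LgDg, LinearMap.sum_apply,
    LinearMap.smul_apply, Module.End.mul_apply, map_sum]
  nth_rewrite 1 [sum_comm]
  simp only [← sum_add_distrib, hterm]
  simp only [sum_add_distrib, sum_ite_eq, hg]
  rw [sum_comm (s := range M) (t := range M) (f := fun k l => if l + n = k then _ else 0)]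
  simp only [sum_ite_eq, hxi]

section Pairs

variable (T₂ v : ℝ) {M : ℕ} (m n : ℕ)

lemma anticomm_GT₂_GxiDg_add (hm : m + 1 < M) (hn : n + 1 < M) :
    anticomm (GT₂ T₂ m) (GxiDg M n) + anticomm (GT₂ T₂ n) (GxiDg M m)
      = (2 : ℝ) • LT₂ T₂ (m + n) := by
  rw [anticomm_GT₂_GxiDg T₂ m n hm, anticomm_GT₂_GxiDg T₂ n m hn, LT₂, Nat.add_comm n m,
    two_smul]

lemma sum_smul_ximul_dxi_add :
    ∑ l ∈ range M, ((l : ℝ) + n) • (ximul l * dxi (m + n + l - 1))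
      + ∑ l ∈ range M, ((l : ℝ) + m) • (ximul l * dxi (m + n + l - 1))
      = (2 : ℝ) • LxiDxi M (m + n) := by
  rw [LxiDxi, smul_sum, ← sum_add_distrib]
  refine sum_congr rfl fun l _ => ?_
  split_ifs with h
  · obtain ⟨rfl, rfl, rfl⟩ : m = 0 ∧ n = 0 ∧ l = 0 := by omega
    simp
  · rw [← add_smul, smul_smul]
    congr 1
    push_cast
    ring

lemma anticomm_GgDxi_GxiDg_add_apply {N : ℕ} {a : SEA} (ha : a ∈ supportedBelow N)
    (hM : N + 1 ≤ M) :
    (anticomm (GgDxi M m) (GxiDg M n) + anticomm (GgDxi M n) (GxiDg M m)) a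
      = (2 : ℝ) • (LgDg M (m + n) + LxiDxi M (m + n)) a := by
  have hxi := LinearMap.congr_fun (sum_smul_ximul_dxi_add (M := M) m n) a
  rw [LinearMap.add_apply, anticomm_GgDxi_GxiDg_apply m n ha hM,
    anticomm_GgDxi_GxiDg_apply n m ha hM, Nat.add_comm n m]
  simp only [LinearMap.add_apply, LinearMap.smul_apply] at hxi ⊢
  rw [smul_add, ← hxi, two_smul]
  abel

lemma anticomm_GxiDg_GDxiDg_add (hm : m ≤ M) (hn : n ≤ M) :
    anticomm (GxiDg M m) (GDxiDg v n) + anticomm (GxiDg M n) (GDxiDg v m)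
      = (2 : ℝ) • LDgDg v (m + n) := by
  rw [anticomm_GxiDg_GDxiDg v m n hn, anticomm_GxiDg_GDxiDg v n m hm, LDgDg, smul_smul,
    show (2 : ℝ) * (v / 2) = v by ring, ← smul_add,
    sum_range_add_sum_range_of_symm (fun i j => dg i * dg j) dg_mul_dg_comm]

lemma anticomm_GgDxi_GDxiDg_add (hm : m ≤ M) (hn : n ≤ M) :
    anticomm (GgDxi M m) (GDxiDg v n) + anticomm (GgDxi M n) (GDxiDg v m)
      = (2 : ℝ) • LDxiDxi v (m + n) := by
  rw [anticomm_GgDxi_GDxiDg v m n hn, anticomm_GgDxi_GDxiDg v n m hm, LDxiDxi, smul_smul,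
    show (2 : ℝ) * (v / 2) = v by ring, ← smul_add, Nat.add_comm n m]
  congr 1
  set K := m + n - 1
  set G : ℕ → Module.End ℝ SEA := fun j => dxi j * dxi (m + n - 2 - j)
  set c : ℕ → ℝ := fun j => ((n - 1 - j : ℕ) : ℝ) + ((m - 1 - j : ℕ) : ℝ)
  set e : ℕ → ℝ := fun j => (((m + n : ℕ) : ℝ) - 2) / 2 - j
  have hc : ∀ j < K, (c - e) (K - 1 - j) = (c - e) j := by
    intro j hj
    have hnat : (((n - 1 - (K - 1 - j)) + (m - 1 - (K - 1 - j)) + (K - 1 - j) : ℕ) : ℝ)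
        = (((n - 1 - j) + (m - 1 - j) + j : ℕ) : ℝ) := by congr 1; omega
    have hK : (((K - 1 - j) + j + 2 : ℕ) : ℝ) = ((m + n : ℕ) : ℝ) := by congr 1; omega
    simp only [Pi.sub_apply, c, e]
    push_cast at hnat hK ⊢
    linarith
  have hG : ∀ j < K, G (K - 1 - j) = -G j := by
    intro j hj
    simp only [G]
    rw [show m + n - 2 - (K - 1 - j) = j by omega, show K - 1 - j = m + n - 2 - j by omega,
      dxi_mul_dxi_anticomm]
  calc ∑ j ∈ range n, ((n - 1 - j : ℕ) : ℝ) • G j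
        + ∑ j ∈ range m, ((m - 1 - j : ℕ) : ℝ) • G j
      = ∑ j ∈ range K, c j • G j := by
        rw [sum_range_eq_sum_range_of_eq_zero (B := K) fun j hj => by
            rw [show n - 1 - j = 0 by omega, Nat.cast_zero, zero_smul],
          sum_range_eq_sum_range_of_eq_zero (A := m) (B := K) fun j hj => by
            rw [show m - 1 - j = 0 by omega, Nat.cast_zero, zero_smul],
          ← sum_add_distrib]
        simp only [c, add_smul]
    _ = ∑ j ∈ range K, e j • G j := by
        rw [← sub_eq_zero, ← sum_sub_distrib (f := fun j => c j • G j)]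
        exact (sum_congr rfl fun j _ => (sub_smul (c j) (e j) (G j)).symm).trans
          (sum_range_smul_eq_zero_of_reflect (c - e) G hc hG)
    _ = _ := sum_congr rfl fun j _ => by rw [show m + n - j - 2 = m + n - 2 - j by omega]

end Pairs

lemma anticomm_Gtrunc (T₂ v : ℝ) (M m n : ℕ) :
    anticomm (Gtrunc T₂ v M m) (Gtrunc T₂ v M n)
      = (anticomm (GT₂ T₂ m) (GxiDg M n) + anticomm (GT₂ T₂ n) (GxiDg M m))
        + (anticomm (GgDxi M m) (GDxiDg v n) + anticomm (GgDxi M n) (GDxiDg v m))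
        + (anticomm (GxiDg M m) (GDxiDg v n) + anticomm (GxiDg M n) (GDxiDg v m))
        + (anticomm (GgDxi M m) (GxiDg M n) + anticomm (GgDxi M n) (GxiDg M m)) := by
  simp only [Gtrunc, anticomm_add_left, anticomm_add_right]
  rw [anticomm_comm (GgDxi M m) (GT₂ T₂ n), anticomm_comm (GxiDg M m) (GT₂ T₂ n),
    anticomm_comm (GDxiDg v m) (GT₂ T₂ n), anticomm_comm (GxiDg M m) (GgDxi M n),
    anticomm_comm (GDxiDg v m) (GgDxi M n), anticomm_comm (GDxiDg v m) (GxiDg M n)]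
  simp only [anticomm_GT₂_GT₂, anticomm_GT₂_GgDxi, anticomm_GT₂_GDxiDg, anticomm_GgDxi_GgDxi,
    anticomm_GxiDg_GxiDg, anticomm_GDxiDg_GDxiDg, add_zero, zero_add]
  abel

lemma anticomm_Gtrunc_apply (T₂ v : ℝ) {M N : ℕ} (m n : ℕ) {a : SEA}
    (ha : a ∈ supportedBelow N) (hN : N + 1 ≤ M) (hm : m + 1 < M) (hn : n + 1 < M) :
    anticomm (Gtrunc T₂ v M m) (Gtrunc T₂ v M n) a = (2 : ℝ) • Ltrunc T₂ v M (m + n) a := by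
  rw [anticomm_Gtrunc, anticomm_GT₂_GxiDg_add T₂ m n hm hn,
    anticomm_GgDxi_GDxiDg_add v m n (by omega) (by omega),
    anticomm_GxiDg_GDxiDg_add v m n (by omega) (by omega), LinearMap.add_apply,
    anticomm_GgDxi_GxiDg_add_apply m n ha hN]
  simp only [Ltrunc, LinearMap.add_apply, LinearMap.smul_apply, smul_add]
  abel

theorem superVirasoro_anticommutator (T₂ v : ℝ) (m n : ℕ) :
    Gop T₂ v m ∘ Gop T₂ v n + Gop T₂ v n ∘ Gop T₂ v m = (2 : ℝ) • Lop T₂ v (m + n) := by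
  funext a
  obtain ⟨N, ha⟩ := exists_mem_supportedBelow a
  have hM : N + 1 + 1 ≤ N + m + n + 2 := by omega
  have ha' := supportedBelow_mono (Nat.le_succ N) ha
  simp only [Pi.add_apply, Function.comp_apply, Pi.smul_apply]
  rw [Gop_eq_Gtrunc (Gop_mem_supportedBelow ha) hM, Gop_eq_Gtrunc (Gop_mem_supportedBelow ha) hM,
    Gop_eq_Gtrunc ha' hM, Gop_eq_Gtrunc ha' hM, Lop_eq_Ltrunc ha' hM]
  exact anticomm_Gtrunc_apply T₂ v m n ha' hM (by omega) (by omega)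
end

section
/- The Virasoro constraints imply the loop equation of the formal Hermitian one-matrix model (eq. (2.29), derived in Appendix B.1): Let t and N be nonzero reals and T₂ real, and let F ∈ ℝ[[g₀,g₁,…]] satisfy, for every integer n ≥ −1, the Virasoro free-energy equation T₂ ∂F/∂g_{n+2} + Σ_{k≥1} k g_k ∂F/∂g_{k+n} + (t/N)² Σ_{j=0}^{n} ( ∂²F/(∂g_j∂g_{n−j}) + (∂F/∂g_j)(∂F/∂g_{n−j}) ) = 0 (the sum over j being empty for n = −1). Define the following formal series in an auxiliary variable x with coefficients in ℝ[[g₀,g₁,…]], indexed by m ∈ ℤ: W₁(x) := −(t/N) Σ_{k≥0} x^{−k−1} ∂F/∂g_k; W₂(x,x) := (t/N)² Σ_{k,l≥0} x^{−k−l−2} ∂²F/(∂g_k∂g_l); V′(x) := T₂ x + Σ_{k≥1} k g_k x^{k−1}; P₁(x) := −T₂ ∂F/∂g₀ − Σ_{m≥0} x^m Σ_{k≥0} (m+k+2) g_{m+k+2} ∂F/∂g_k. Then the loop equation holds: −(N/t) V′(x) W₁(x) + P₁(x) + W₁(x)² + W₂(x,x) = 0, meaning that for every integer m the total coefficient of x^m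 on the left-hand side (a coefficientwise-convergent sum: for each fixed monomial in the g's only finitely many terms contribute) vanishes in ℝ[[g₀,g₁,…]]. -/
/-!
Statement 8: the Virasoro constraints imply the loop equation of the formal Hermitian
one-matrix model (eq. (2.29), derived in Appendix B.1 of the paper).

We work in `ℝ[[g₀,g₁,…]] = MvPowerSeries ℕ ℝ`.

* `pd i F` is the coefficientwise formal partial derivative `∂F/∂g_i`.
* `cSum u` is the coefficientwise sum `Σ_{k≥0} u k` of a family of power series (via
  `finsum`; for the families appearing below, on each fixed monomial only finitely many
  summands have a nonzero coefficient, so the coefficientwise `finsum` is the honest sum).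
* The Virasoro free-energy equations, indexed by the integers `n ≥ -1`, are reindexed by
  `m : ℕ` via `n = m - 1` (a bijection onto `{n : ℤ | n ≥ -1}`): `virasoroFE T₂ t N F m`
  says `T₂ ∂F/∂g_{n+2} + Σ_{k≥1} k g_k ∂F/∂g_{k+n}`
  `+ (t/N)² Σ_{j=0}^{n} (∂²F/(∂g_j∂g_{n-j}) + (∂F/∂g_j)(∂F/∂g_{n-j})) = 0` with `n = m-1`
  (the `k = 0` summand carries coefficient `0`, and `Σ_{j=0}^{n}` is `Finset.range m`).
* The formal series `W₁(x) = -(t/N) Σ_{k≥0} x^{-k-1} ∂F/∂g_k`,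
  `W₂(x,x) = (t/N)² Σ_{k,l≥0} x^{-k-l-2} ∂²F/(∂g_k∂g_l)`,
  `V'(x) = T₂ x + Σ_{k≥1} k g_k x^{k-1}` and
  `P₁(x) = -T₂ ∂F/∂g₀ - Σ_{m≥0} x^m Σ_{k≥0} (m+k+2) g_{m+k+2} ∂F/∂g_k`
  are encoded by their coefficients at each power `x^μ`, `μ : ℤ`: `W1coef`, `W2coef`,
  `VpW1coef` (the coefficient of `V'(x)·W₁(x)`), `W1sqcoef` (of `W₁(x)²`), `P1coef`.
* The conclusion is the loop equation
  `-(N/t) V'(x) W₁(x) + P₁(x) + W₁(x)² + W₂(x,x) = 0`,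
  i.e. for every `μ : ℤ` the total coefficient of `x^μ` vanishes.
-/

open MvPowerSeries

/-- Coefficientwise formal partial derivative `∂F/∂g_i` of a power series. -/
noncomputable def pd (i : ℕ) (F : MvPowerSeries ℕ ℝ) : MvPowerSeries ℕ ℝ :=
  fun d => ((d i : ℝ) + 1) * coeff (d + Finsupp.single i 1) F

/-- Coefficientwise sum of a family of power series. -/
noncomputable def cSum (u : ℕ → MvPowerSeries ℕ ℝ) : MvPowerSeries ℕ ℝ :=
  fun d => ∑ᶠ k, coeff d (u k)

/-- The Virasoro free-energy equation `L_{m-1}`-constraint for `Z = e^F` (eq. (2.26)). -/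
def virasoroFE (T₂ t N : ℝ) (F : MvPowerSeries ℕ ℝ) (m : ℕ) : Prop :=
  T₂ • pd (m + 1) F
    + cSum (fun k => (k : ℝ) • (X k * pd (m + k - 1) F))
    + ((t / N) ^ 2) •
        ∑ j ∈ Finset.range m, (pd j (pd (m - 1 - j) F) + pd j F * pd (m - 1 - j) F) = 0

section LoopData

variable (T₂ t N : ℝ) (F : MvPowerSeries ℕ ℝ)

/-- Coefficient of `x^μ` in `W₁(x) = -(t/N) Σ_{k≥0} x^{-k-1} ∂F/∂g_k`. -/
noncomputable def W1coef (μ : ℤ) : MvPowerSeries ℕ ℝ :=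
  if μ < 0 then (-(t / N)) • pd (-μ - 1).toNat F else 0

/-- Coefficient of `x^μ` in `W₂(x,x) = (t/N)² Σ_{k,l≥0} x^{-k-l-2} ∂²F/(∂g_k∂g_l)`. -/
noncomputable def W2coef (μ : ℤ) : MvPowerSeries ℕ ℝ :=
  if μ ≤ -2 then
    ((t / N) ^ 2) • ∑ k ∈ Finset.range (-μ - 1).toNat, pd k (pd ((-μ - 2).toNat - k) F)
  else 0

/-- Coefficient of `x^μ` in `V'(x) W₁(x)`, where `V'(x) = T₂ x + Σ_{k≥1} k g_k x^{k-1}`. -/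
noncomputable def VpW1coef (μ : ℤ) : MvPowerSeries ℕ ℝ :=
  T₂ • W1coef t N F (μ - 1) + cSum (fun k => (k : ℝ) • (X k * W1coef t N F (μ - k + 1)))

/-- Coefficient of `x^μ` in `W₁(x)²`. -/
noncomputable def W1sqcoef (μ : ℤ) : MvPowerSeries ℕ ℝ :=
  if μ ≤ -2 then
    ∑ k ∈ Finset.range (-μ - 1).toNat, W1coef t N F (-(k : ℤ) - 1) * W1coef t N F (μ + k + 1)
  else 0

/-- Coefficient of `x^μ` in
`P₁(x) = -T₂ ∂F/∂g₀ - Σ_{m≥0} x^m Σ_{k≥0} (m+k+2) g_{m+k+2} ∂F/∂g_k`. -/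
noncomputable def P1coef (μ : ℤ) : MvPowerSeries ℕ ℝ :=
  if 0 ≤ μ then
    -(if μ = 0 then T₂ • pd 0 F else 0)
      - cSum (fun k => ((μ.toNat + k + 2 : ℕ) : ℝ) • (X (μ.toNat + k + 2) * pd k F))
  else 0

end LoopData

/-!
The loop equation is the generating series of the Virasoro constraints. Multiplying by
`-(N/t)` turns `W₁` back into first derivatives of `F`: at the power `x^{-m-1}` the
left-hand side is the constraint `L_{m-1}`, with `W₁²` and `W₂` supplying its quadratic
term, while at a nonnegative power `P₁` cancels the polynomial part of `-(N/t) V'(x) W₁(x)`.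
-/

theorem finsum_eq_finsum_add_of_forall_lt {M : Type*} [AddCommMonoid M] (f : ℕ → M) (c : ℕ)
    (h : ∀ k < c, f k = 0) : ∑ᶠ k, f k = ∑ᶠ k, f (k + c) := by
  rw [← finsum_mem_range (f := f) (add_left_injective c), ← finsum_mem_univ f]
  refine finsum_mem_inter_support_eq' _ _ _ fun k hk => ?_
  simp only [Set.mem_univ, true_iff, Set.mem_range]
  exact ⟨k - c, Nat.sub_add_cancel (not_lt.mp fun hkc => hk (h k hkc))⟩

theorem smul_cSum (c : ℝ) (u : ℕ → MvPowerSeries ℕ ℝ) :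
    c • cSum u = cSum fun k => c • u k := by
  ext d
  simp only [cSum, map_smul, coeff_apply, smul_finsum]

theorem cSum_eq_cSum_add_of_forall_lt (u : ℕ → MvPowerSeries ℕ ℝ) (c : ℕ)
    (h : ∀ k < c, u k = 0) : cSum u = cSum fun k => u (k + c) := by
  ext d
  exact finsum_eq_finsum_add_of_forall_lt (fun k => coeff d (u k)) c
    fun k hk => by rw [h k hk, map_zero]

section LoopCoefficients

variable {T₂ t N : ℝ} {F : MvPowerSeries ℕ ℝ}

theorem neg_div_smul_W1coef (ht : t ≠ 0) (hN : N ≠ 0) (μ : ℤ) :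
    (-(N / t)) • W1coef t N F μ = if μ < 0 then pd (-μ - 1).toNat F else 0 := by
  unfold W1coef
  split_ifs
  · rw [smul_smul, neg_mul_neg, div_mul_div_cancel₀ ht, div_self hN, one_smul]
  · exact smul_zero _

theorem W1sqcoef_natCast (n : ℕ) : W1sqcoef t N F n = 0 :=
  if_neg (by omega)

theorem W2coef_natCast (n : ℕ) : W2coef t N F n = 0 :=
  if_neg (by omega)

theorem P1coef_negSucc (m : ℕ) : P1coef T₂ F (Int.negSucc m) = 0 :=
  if_neg (by omega)

theorem neg_div_smul_VpW1coef_natCast (ht : t ≠ 0) (hN : N ≠ 0) (n : ℕ) :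
    (-(N / t)) • VpW1coef T₂ t N F n = -P1coef T₂ F n := by
  have hT₂ : (-(N / t)) • T₂ • W1coef t N F (n - 1) =
      if (n : ℤ) = 0 then T₂ • pd 0 F else 0 := by
    rw [smul_comm, neg_div_smul_W1coef ht hN]
    by_cases hn : (n : ℤ) = 0
    · rw [if_pos (by omega), if_pos hn, show (-((n : ℤ) - 1) - 1).toNat = 0 by omega]
    · rw [if_neg (by omega), if_neg hn, smul_zero]
  have hsum : (-(N / t)) • cSum (fun k => (k : ℝ) • (X k * W1coef t N F (n - k + 1))) =
      cSum fun k => ((n + k + 2 : ℕ) : ℝ) • (X (n + k + 2) * pd k F) := by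
    rw [smul_cSum, cSum_eq_cSum_add_of_forall_lt _ (n + 2) fun k hk => ?_]
    · congr 1
      funext k
      rw [smul_comm, ← mul_smul_comm, neg_div_smul_W1coef ht hN, if_pos (by omega),
        show (-((n : ℤ) - (k + (n + 2) : ℕ) + 1) - 1).toNat = k by omega,
        show k + (n + 2) = n + k + 2 by omega]
    · rw [smul_comm, ← mul_smul_comm, neg_div_smul_W1coef ht hN, if_neg (by omega),
        mul_zero, smul_zero]
  rw [VpW1coef, P1coef, if_pos (Int.natCast_nonneg n), Int.toNat_natCast, smul_add, hT₂, hsum,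
    neg_sub, sub_neg_eq_add, add_comm]

theorem neg_div_smul_VpW1coef_negSucc (ht : t ≠ 0) (hN : N ≠ 0) (m : ℕ) :
    (-(N / t)) • VpW1coef T₂ t N F (Int.negSucc m) =
      T₂ • pd (m + 1) F + cSum fun k => (k : ℝ) • (X k * pd (m + k - 1) F) := by
  rw [VpW1coef, smul_add, smul_comm, neg_div_smul_W1coef ht hN, if_pos (by omega), smul_cSum]
  congr 1
  · rw [show (-(Int.negSucc m - 1) - 1).toNat = m + 1 by omega]
  · congr 1
    funext k
    rcases k.eq_zero_or_pos with rfl | hk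
    · simp
    · rw [smul_comm, ← mul_smul_comm, neg_div_smul_W1coef ht hN, if_pos (by omega),
        show (-(Int.negSucc m - k + 1) - 1).toNat = m + k - 1 by omega]

theorem W1sqcoef_add_W2coef_negSucc (m : ℕ) :
    W1sqcoef t N F (Int.negSucc m) + W2coef t N F (Int.negSucc m) =
      (t / N) ^ 2 •
        ∑ j ∈ Finset.range m, (pd j (pd (m - 1 - j) F) + pd j F * pd (m - 1 - j) F) := by
  rcases m.eq_zero_or_pos with rfl | hm
  · simp [W1sqcoef, W2coef]
  have hsq : W1sqcoef t N F (Int.negSucc m) =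
      (t / N) ^ 2 • ∑ j ∈ Finset.range m, pd j F * pd (m - 1 - j) F := by
    rw [W1sqcoef, if_pos (by omega), show (-Int.negSucc m - 1).toNat = m by omega,
      Finset.smul_sum]
    refine Finset.sum_congr rfl fun j hj => ?_
    have hjm := Finset.mem_range.mp hj
    rw [W1coef, W1coef, if_pos (by omega), if_pos (by omega), smul_mul_smul_comm,
      show (-(-(j : ℤ) - 1) - 1).toNat = j by omega,
      show (-(Int.negSucc m + j + 1) - 1).toNat = m - 1 - j by omega, neg_mul_neg, sq]
  rw [hsq, W2coef, if_pos (by omega), show (-Int.negSucc m - 1).toNat = m by omega,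
    show (-Int.negSucc m - 2).toNat = m - 1 by omega, add_comm, ← smul_add,
    ← Finset.sum_add_distrib]

end LoopCoefficients

/-- The Virasoro constraints imply the loop equation
`-(N/t) V'(x) W₁(x) + P₁(x) + W₁(x)² + W₂(x,x) = 0`, coefficientwise in `x`. -/
theorem virasoro_implies_loop_equation (T₂ t N : ℝ) (ht : t ≠ 0) (hN : N ≠ 0)
    (F : MvPowerSeries ℕ ℝ) (hF : ∀ m : ℕ, virasoroFE T₂ t N F m) :
    ∀ μ : ℤ,
      (-(N / t)) • VpW1coef T₂ t N F μ + P1coef T₂ F μ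
        + W1sqcoef t N F μ + W2coef t N F μ = 0 := by
  intro μ
  cases μ with
  | ofNat n =>
    rw [Int.ofNat_eq_natCast, neg_div_smul_VpW1coef_natCast ht hN, W1sqcoef_natCast,
      W2coef_natCast, neg_add_cancel, add_zero, add_zero]
  | negSucc m =>
    rw [neg_div_smul_VpW1coef_negSucc ht hN, P1coef_negSucc, add_zero, add_assoc,
      W1sqcoef_add_W2coef_negSucc]
    exact hF m
end
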